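/- arXiv:1903.07617 — 2 statements merged into one kernel-verified Lean document; each statement's English description precedes it below -/
import Mathlib

section
/- Let r : ℝ → ℝ² be a C² arc-length parametrization of a plane curve Γ with unit tangent τ = ṙ, unit normal ν, and signed curvature κ̊ (τ̇ = κ̊ ν). Assume u, v, p are C¹ on an open set O ⊆ ℝ²×ℝ×ℝ, satisfy the horizontal momentum equation ρ(u_t + (u·∇)u + v u_y) + ∇p = 0, and u·ν = 0 holds on a relatively open wet lateral set S ⊆ O ∩ {(r(s),y,t)}. Let x₀ = r(s₀), let η be a C¹ free surface defined on an open neighborhood D ⊆ ℝ² of x₀ and times in an interval I, with (x, η(x,t), t) ∈ O for x ∈ D, and suppose the dynamic condition p(x, η(x,t), t) = 0 holds for all x ∈ D, t ∈ I. If (x₀, η(x₀,t), t) ∈ S, then at that point p_y · (∇η·ν) = ρ·u_τ²·κ̊, where u_τ = u·τ. In particular the free surface meets the lateral wall at a right angle only where κ̊ = 0 or u_τ = 0 (assuming p_y ≠ 0). -/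
/-!
Take the component of the horizontal momentum equation along the wall normal `ν`.
Impermeability `u·ν = 0` holds on a whole piece of the wall, so it can be differentiated
along the wall: in `t` and `y` this kills the normal parts of `u_t` and `u_y`, and along the
curve, writing `u = u_τ τ` and using `τ' = κ̊ ν`, it turns the normal part of `(u·∇)u` into
`u_τ² κ̊`. Differentiating the dynamic condition `p(x, η(x,t), t) = 0` in the direction `ν`
gives `∇p·ν = -p_y (∇η·ν)`.
-/

noncomputable section

/-- Space-time points `((x₁,x₂), y, t)`: horizontal position, height, time. -/
abbrev Pt : Type := (ℝ × ℝ) × ℝ × ℝ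

/-- Partial derivative `∂_{x₁}`. -/
noncomputable def dX1 (f : Pt → ℝ) (q : Pt) : ℝ :=
  fderiv ℝ f q (((1 : ℝ), (0 : ℝ)), (0 : ℝ), (0 : ℝ))

/-- Partial derivative `∂_{x₂}`. -/
noncomputable def dX2 (f : Pt → ℝ) (q : Pt) : ℝ :=
  fderiv ℝ f q (((0 : ℝ), (1 : ℝ)), (0 : ℝ), (0 : ℝ))

/-- Partial derivative `∂_y`. -/
noncomputable def dY (f : Pt → ℝ) (q : Pt) : ℝ :=
  fderiv ℝ f q (((0 : ℝ), (0 : ℝ)), (1 : ℝ), (0 : ℝ))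

/-- Partial derivative `∂_t`. -/
noncomputable def dT (f : Pt → ℝ) (q : Pt) : ℝ :=
  fderiv ℝ f q (((0 : ℝ), (0 : ℝ)), (0 : ℝ), (1 : ℝ))

/-- Spatial partial derivative `∂_{x₁}` of the free surface `η(x,t)` at fixed time. -/
noncomputable def gX1 (η : (ℝ × ℝ) × ℝ → ℝ) (x : ℝ × ℝ) (t : ℝ) : ℝ :=
  fderiv ℝ (fun x' => η (x', t)) x ((1 : ℝ), (0 : ℝ))

/-- Spatial partial derivative `∂_{x₂}` of the free surface `η(x,t)` at fixed time. -/
noncomputable def gX2 (η : (ℝ × ℝ) × ℝ → ℝ) (x : ℝ × ℝ) (t : ℝ) : ℝ :=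
  fderiv ℝ (fun x' => η (x', t)) x ((0 : ℝ), (1 : ℝ))

open Topology Filter

lemma fderiv_apply_eq_partials (f : Pt → ℝ) (q : Pt) (x : ℝ × ℝ) (c d : ℝ) :
    fderiv ℝ f q (x, c, d) = x.1 * dX1 f q + x.2 * dX2 f q + c * dY f q + d * dT f q := by
  have hbasis : ((x, c, d) : Pt) = (x.1 • (((1, 0), 0, 0) : Pt) + x.2 • (((0, 1), 0, 0) : Pt))
      + (c • (((0, 0), 1, 0) : Pt) + d • (((0, 0), 0, 1) : Pt)) := by
    simp
  rw [hbasis]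
  simp only [map_add, map_smul, smul_eq_mul, dX1, dX2, dY, dT]
  ring

lemma fderiv_apply_eq_gradient (η : (ℝ × ℝ) × ℝ → ℝ) (x n : ℝ × ℝ) (t : ℝ) :
    fderiv ℝ (fun x' => η (x', t)) x n = n.1 * gX1 η x t + n.2 * gX2 η x t := by
  have hbasis : n = n.1 • ((1, 0) : ℝ × ℝ) + n.2 • ((0, 1) : ℝ × ℝ) := by ext <;> simp
  conv_lhs => rw [hbasis]
  simp only [map_add, map_smul, smul_eq_mul, gX1, gX2]

lemma eq_smul_of_orthonormal {τ ν w : ℝ × ℝ} (hτ : τ.1 ^ 2 + τ.2 ^ 2 = 1)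
    (hν : ν.1 ^ 2 + ν.2 ^ 2 = 1) (hτν : τ.1 * ν.1 + τ.2 * ν.2 = 0)
    (hw : w.1 * ν.1 + w.2 * ν.2 = 0) :
    w = (w.1 * τ.1 + w.2 * τ.2) • τ := by
  have hdet : (τ.1 * ν.2 - τ.2 * ν.1) ^ 2 = 1 := by
    linear_combination (ν.1 ^ 2 + ν.2 ^ 2) * hτ + hν - (τ.1 * ν.1 + τ.2 * ν.2) * hτν
  have hcross : w.2 * τ.1 - w.1 * τ.2 = 0 := by
    linear_combination (τ.1 * ν.2 - τ.2 * ν.1) * (hw - w.1 * (τ.1 * hτν - ν.1 * hτ)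
      - w.2 * (τ.2 * hτν - ν.2 * hτ)) - (w.2 * τ.1 - w.1 * τ.2) * hdet
  ext <;> simp only [Prod.smul_fst, Prod.smul_snd, smul_eq_mul]
  · linear_combination -w.1 * hτ - τ.2 * hcross
  · linear_combination -w.2 * hτ + τ.1 * hcross

section NormalComponent

variable {E : Type*} [NormedAddCommGroup E] [NormedSpace ℝ E] {u : E → ℝ × ℝ}

lemma fderiv_normal_component_eq_zero {γ : ℝ → E} {e : E} {σ₀ : ℝ} {n : ℝ × ℝ}
    (hu₁ : DifferentiableAt ℝ (fun z => (u z).1) (γ σ₀))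
    (hu₂ : DifferentiableAt ℝ (fun z => (u z).2) (γ σ₀)) (hγ : HasDerivAt γ e σ₀)
    (h0 : ∀ᶠ σ in 𝓝 σ₀, (u (γ σ)).1 * n.1 + (u (γ σ)).2 * n.2 = 0) :
    fderiv ℝ (fun z => (u z).1) (γ σ₀) e * n.1
      + fderiv ℝ (fun z => (u z).2) (γ σ₀) e * n.2 = 0 :=
  (((hu₁.hasFDerivAt.comp_hasDerivAt σ₀ hγ).mul_const n.1).add
    ((hu₂.hasFDerivAt.comp_hasDerivAt σ₀ hγ).mul_const n.2)).unique
    ((hasDerivAt_const σ₀ 0).congr_of_eventuallyEq h0)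

lemma fderiv_normal_component_eq_of_tangent {γ : ℝ → E} {e : E} {τ ν : ℝ → ℝ × ℝ}
    {κ s₀ : ℝ} (hu₁ : DifferentiableAt ℝ (fun z => (u z).1) (γ s₀))
    (hu₂ : DifferentiableAt ℝ (fun z => (u z).2) (γ s₀)) (hγ : HasDerivAt γ e s₀)
    (hτ : HasDerivAt τ (κ • ν s₀) s₀) (hτ_unit : ∀ s, (τ s).1 ^ 2 + (τ s).2 ^ 2 = 1)
    (hν_unit : ∀ s, (ν s).1 ^ 2 + (ν s).2 ^ 2 = 1)
    (horth : ∀ s, (τ s).1 * (ν s).1 + (τ s).2 * (ν s).2 = 0)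
    (h0 : ∀ᶠ s in 𝓝 s₀, (u (γ s)).1 * (ν s).1 + (u (γ s)).2 * (ν s).2 = 0) :
    fderiv ℝ (fun z => (u z).1) (γ s₀) e * (ν s₀).1
      + fderiv ℝ (fun z => (u z).2) (γ s₀) e * (ν s₀).2
      = ((u (γ s₀)).1 * (τ s₀).1 + (u (γ s₀)).2 * (τ s₀).2) * κ := by
  have hw₁ := hu₁.hasFDerivAt.comp_hasDerivAt s₀ hγ
  have hw₂ := hu₂.hasFDerivAt.comp_hasDerivAt s₀ hγ
  have hτ₁ : HasDerivAt (fun s => (τ s).1) (κ * (ν s₀).1) s₀ :=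
    (hasFDerivAt_fst (p := τ s₀)).comp_hasDerivAt s₀ hτ
  have hτ₂ : HasDerivAt (fun s => (τ s).2) (κ * (ν s₀).2) s₀ :=
    (hasFDerivAt_snd (p := τ s₀)).comp_hasDerivAt s₀ hτ
  set c := (u (γ s₀)).1 * (τ s₀).1 + (u (γ s₀)).2 * (τ s₀).2
  obtain ⟨c', hc⟩ : ∃ c', HasDerivAt
      (fun s => (u (γ s)).1 * (τ s).1 + (u (γ s)).2 * (τ s).2) c' s₀ :=
    ⟨_, (hw₁.mul hτ₁).add (hw₂.mul hτ₂)⟩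
  have htangent : ∀ᶠ s in 𝓝 s₀,
      u (γ s) = ((u (γ s)).1 * (τ s).1 + (u (γ s)).2 * (τ s).2) • τ s :=
    h0.mono fun s hs => eq_smul_of_orthonormal (hτ_unit s) (hν_unit s) (horth s) hs
  have hA₁ := hw₁.unique ((hc.mul hτ₁).congr_of_eventuallyEq
    (htangent.mono fun s hs => congrArg Prod.fst hs))
  have hA₂ := hw₂.unique ((hc.mul hτ₂).congr_of_eventuallyEq
    (htangent.mono fun s hs => congrArg Prod.snd hs))
  linear_combination (ν s₀).1 * hA₁ + (ν s₀).2 * hA₂ + c' * horth s₀ + c * κ * hν_unit s₀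

end NormalComponent

lemma directional_deriv_eq_zero_of_eq_zero_on_graph {P : Pt → ℝ} {h : ℝ × ℝ → ℝ}
    {x₀ : ℝ × ℝ} {t : ℝ} (hP : DifferentiableAt ℝ P (x₀, h x₀, t)) (hh : DifferentiableAt ℝ h x₀)
    (h0 : ∀ᶠ x in 𝓝 x₀, P (x, h x, t) = 0) (n : ℝ × ℝ) :
    n.1 * dX1 P (x₀, h x₀, t) + n.2 * dX2 P (x₀, h x₀, t)
      + fderiv ℝ h x₀ n * dY P (x₀, h x₀, t) = 0 := by
  have hG := hP.hasFDerivAt.comp x₀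
    ((hasFDerivAt_id x₀).prodMk (hh.hasFDerivAt.prodMk (hasFDerivAt_const t x₀)))
  have hG0 := hG.unique ((hasFDerivAt_const 0 x₀).congr_of_eventuallyEq h0)
  have hn := congrArg (· n) hG0
  simp only [ContinuousLinearMap.comp_apply, ContinuousLinearMap.prod_apply,
    ContinuousLinearMap.coe_id', id_eq, zero_apply, fderiv_apply_eq_partials] at hn
  linear_combination hn

lemma normal_acceleration_eq_on_wall {r ν : ℝ → ℝ × ℝ} {κ : ℝ → ℝ}
    (hr : ContDiff ℝ 2 r)
    (harc : ∀ s, (deriv r s).1 ^ 2 + (deriv r s).2 ^ 2 = 1)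
    (hν_unit : ∀ s, (ν s).1 ^ 2 + (ν s).2 ^ 2 = 1)
    (hν_orth : ∀ s, (deriv r s).1 * (ν s).1 + (deriv r s).2 * (ν s).2 = 0)
    (hFrenet : ∀ s, deriv (fun s' => deriv r s') s = κ s • ν s)
    {u : Pt → ℝ × ℝ} {W : Set Pt} (hW : IsOpen W)
    (himp : ∀ s y t, ((r s, y, t) : Pt) ∈ W →
      (u (r s, y, t)).1 * (ν s).1 + (u (r s, y, t)).2 * (ν s).2 = 0)
    {s₀ y₀ t : ℝ} (hq₀ : ((r s₀, y₀, t) : Pt) ∈ W)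
    (hu₁ : DifferentiableAt ℝ (fun z => (u z).1) (r s₀, y₀, t))
    (hu₂ : DifferentiableAt ℝ (fun z => (u z).2) (r s₀, y₀, t)) (w : ℝ) :
    let q₀ : Pt := (r s₀, y₀, t)
    (dT (fun z => (u z).1) q₀ + (u q₀).1 * dX1 (fun z => (u z).1) q₀
        + (u q₀).2 * dX2 (fun z => (u z).1) q₀ + w * dY (fun z => (u z).1) q₀) * (ν s₀).1
      + (dT (fun z => (u z).2) q₀ + (u q₀).1 * dX1 (fun z => (u z).2) q₀
        + (u q₀).2 * dX2 (fun z => (u z).2) q₀ + w * dY (fun z => (u z).2) q₀) * (ν s₀).2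
      = ((u q₀).1 * (deriv r s₀).1 + (u q₀).2 * (deriv r s₀).2) ^ 2 * κ s₀ := by
  intro q₀
  have hline_t : HasDerivAt (fun σ => ((r s₀, y₀, σ) : Pt)) ((0, 0), 0, 1) t :=
    (hasDerivAt_const t _).prodMk ((hasDerivAt_const t _).prodMk (hasDerivAt_id t))
  have hline_y : HasDerivAt (fun σ => ((r s₀, σ, t) : Pt)) ((0, 0), 1, 0) y₀ :=
    (hasDerivAt_const y₀ _).prodMk ((hasDerivAt_id y₀).prodMk (hasDerivAt_const y₀ _))
  have hcurve : HasDerivAt (fun s => ((r s, y₀, t) : Pt)) (deriv r s₀, 0, 0) s₀ :=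
    ((hr.differentiable two_ne_zero) s₀).hasDerivAt.prodMk (hasDerivAt_const s₀ _)
  have hnormal_t : dT (fun z => (u z).1) q₀ * (ν s₀).1
      + dT (fun z => (u z).2) q₀ * (ν s₀).2 = 0 :=
    fderiv_normal_component_eq_zero hu₁ hu₂ hline_t
      ((hline_t.continuousAt.eventually_mem (hW.mem_nhds hq₀)).mono fun σ => himp s₀ y₀ σ)
  have hnormal_y : dY (fun z => (u z).1) q₀ * (ν s₀).1
      + dY (fun z => (u z).2) q₀ * (ν s₀).2 = 0 :=
    fderiv_normal_component_eq_zero hu₁ hu₂ hline_y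
      ((hline_y.continuousAt.eventually_mem (hW.mem_nhds hq₀)).mono fun σ => himp s₀ σ t)
  have hτ : HasDerivAt (deriv r) (κ s₀ • ν s₀) s₀ :=
    hFrenet s₀ ▸ (hr.differentiable_deriv_two s₀).hasDerivAt
  set U := (u q₀).1 * (deriv r s₀).1 + (u q₀).2 * (deriv r s₀).2
  have htangential : fderiv ℝ (fun z => (u z).1) q₀ (deriv r s₀, 0, 0) * (ν s₀).1
      + fderiv ℝ (fun z => (u z).2) q₀ (deriv r s₀, 0, 0) * (ν s₀).2 = U * κ s₀ :=
    fderiv_normal_component_eq_of_tangent hu₁ hu₂ hcurve hτ harc hν_unit hν_orth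
      ((hcurve.continuousAt.eventually_mem (hW.mem_nhds hq₀)).mono fun s => himp s y₀ t)
  have hdir : ((u q₀, 0, 0) : Pt) = U • ((deriv r s₀, 0, 0) : Pt) := by
    conv_lhs =>
      rw [eq_smul_of_orthonormal (harc s₀) (hν_unit s₀) (hν_orth s₀) (himp s₀ y₀ t hq₀)]
    simp only [Prod.smul_mk, smul_zero]
    rfl
  have hadvect : fderiv ℝ (fun z => (u z).1) q₀ (u q₀, 0, 0) * (ν s₀).1
      + fderiv ℝ (fun z => (u z).2) q₀ (u q₀, 0, 0) * (ν s₀).2 = U ^ 2 * κ s₀ := by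
    rw [hdir, map_smul, map_smul, smul_eq_mul, smul_eq_mul]
    linear_combination U * htangential
  simp only [fderiv_apply_eq_partials] at hadvect
  linear_combination hnormal_t + w * hnormal_y + hadvect

theorem free_surface_contact_angle_curved_wall_general
    (ρ : ℝ) (hρ : 0 < ρ)
    (r : ℝ → ℝ × ℝ) (ν : ℝ → ℝ × ℝ) (κ : ℝ → ℝ)
    (hr : ContDiff ℝ 2 r)
    (harc : ∀ s, (deriv r s).1 ^ 2 + (deriv r s).2 ^ 2 = 1)
    (hν_unit : ∀ s, (ν s).1 ^ 2 + (ν s).2 ^ 2 = 1)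
    (hν_orth : ∀ s, (deriv r s).1 * (ν s).1 + (deriv r s).2 * (ν s).2 = 0)
    (hFrenet : ∀ s, deriv (fun s' => deriv r s') s = κ s • ν s)
    (O : Set Pt) (hO : IsOpen O)
    (u : Pt → ℝ × ℝ) (v p : Pt → ℝ)
    (hu : ContDiffOn ℝ 1 u O) (hp : ContDiffOn ℝ 1 p O)
    (hmom1 : ∀ q ∈ O,
      ρ * (dT (fun z => (u z).1) q
        + (u q).1 * dX1 (fun z => (u z).1) q + (u q).2 * dX2 (fun z => (u z).1) q
        + v q * dY (fun z => (u z).1) q) + dX1 p q = 0)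
    (hmom2 : ∀ q ∈ O,
      ρ * (dT (fun z => (u z).2) q
        + (u q).1 * dX1 (fun z => (u z).2) q + (u q).2 * dX2 (fun z => (u z).2) q
        + v q * dY (fun z => (u z).2) q) + dX2 p q = 0)
    (S : Set Pt)
    (hSrel : ∃ U : Set Pt, IsOpen U ∧
      S = U ∩ {q : Pt | ∃ s : ℝ, q.1 = r s})
    (himp : ∀ s y t, ((r s, y, t) : Pt) ∈ S →
      (u (r s, y, t)).1 * (ν s).1 + (u (r s, y, t)).2 * (ν s).2 = 0)
    -- the free surface `η` near the wall point `x₀ = r s₀`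
    (s₀ : ℝ)
    (D : Set (ℝ × ℝ)) (hD : IsOpen D) (hx₀D : r s₀ ∈ D)
    (I : Set ℝ)
    (η : (ℝ × ℝ) × ℝ → ℝ) (hη : ContDiffOn ℝ 1 η (D ×ˢ I))
    (hsurfO : ∀ x ∈ D, ∀ t ∈ I, ((x, η (x, t), t) : Pt) ∈ O)
    (hdyn : ∀ x ∈ D, ∀ t ∈ I, p (x, η (x, t), t) = 0) :
    ∀ t ∈ I, ((r s₀, η (r s₀, t), t) : Pt) ∈ S →
      (dY p (r s₀, η (r s₀, t), t)
          * (gX1 η (r s₀) t * (ν s₀).1 + gX2 η (r s₀) t * (ν s₀).2) =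
        ρ * ((u (r s₀, η (r s₀, t), t)).1 * (deriv r s₀).1
            + (u (r s₀, η (r s₀, t), t)).2 * (deriv r s₀).2) ^ 2 * κ s₀)
      ∧ (dY p (r s₀, η (r s₀, t), t) ≠ 0 →
          gX1 η (r s₀) t * (ν s₀).1 + gX2 η (r s₀) t * (ν s₀).2 = 0 →
            κ s₀ = 0 ∨
              (u (r s₀, η (r s₀, t), t)).1 * (deriv r s₀).1
                + (u (r s₀, η (r s₀, t), t)).2 * (deriv r s₀).2 = 0) := by
  intro t ht hS
  obtain ⟨W, hW, rfl⟩ := hSrel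
  set q₀ : Pt := (r s₀, η (r s₀, t), t)
  have hq₀ : q₀ ∈ O := hsurfO _ hx₀D t ht
  have hdiff {f : Pt → ℝ} (hf : ContDiffOn ℝ 1 f O) : DifferentiableAt ℝ f q₀ :=
    (hf.contDiffAt (hO.mem_nhds hq₀)).differentiableAt one_ne_zero
  have haccel := normal_acceleration_eq_on_wall hr harc hν_unit hν_orth hFrenet hW
    (fun s y t h => himp s y t ⟨h, s, rfl⟩) hS.1 (hdiff hu.fst) (hdiff hu.snd) (v q₀)
  have hη_diff : DifferentiableAt ℝ (fun x => η (x, t)) (r s₀) :=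
    ((hη.comp (contDiffOn_id.prodMk contDiffOn_const) fun x hx => ⟨hx, ht⟩).contDiffAt
      (hD.mem_nhds hx₀D)).differentiableAt one_ne_zero
  have hdynamic := directional_deriv_eq_zero_of_eq_zero_on_graph (hdiff hp) hη_diff
    (eventually_of_mem (hD.mem_nhds hx₀D) fun x hx => hdyn x hx t ht) (ν s₀)
  rw [fderiv_apply_eq_gradient] at hdynamic
  have hcontact : dY p q₀ * (gX1 η (r s₀) t * (ν s₀).1 + gX2 η (r s₀) t * (ν s₀).2)
      = ρ * ((u q₀).1 * (deriv r s₀).1 + (u q₀).2 * (deriv r s₀).2) ^ 2 * κ s₀ := by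
    linear_combination hdynamic - (ν s₀).1 * hmom1 q₀ hq₀ - (ν s₀).2 * hmom2 q₀ hq₀
      + ρ * haccel
  refine ⟨hcontact, fun _ hright => ?_⟩
  rw [hright, mul_zero, eq_comm] at hcontact
  simpa [hρ.ne', or_comm] using hcontact

/-- Contact angle of the free surface with a curved vertical
lateral wall: with the horizontal momentum equation, impermeability `u·ν = 0`
on the wet lateral set `S` over the C² arc-length curve `r` (unit tangent
`τ = ṙ`, unit normal `ν`, signed curvature `κ̊` with `τ̇ = κ̊ ν`), and the
dynamic condition `p(x, η(x,t), t) = 0` near `x₀ = r s₀`, one has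
`p_y·(∇η·ν) = ρ u_τ² κ̊` at the contact point; in particular, if `p_y ≠ 0`
there, then `∇η·ν = 0` forces `κ̊ = 0` or `u_τ = 0`. -/
theorem free_surface_contact_angle_curved_wall
    (ρ : ℝ) (hρ : 0 < ρ)
    (r : ℝ → ℝ × ℝ) (ν : ℝ → ℝ × ℝ) (κ : ℝ → ℝ)
    (hr : ContDiff ℝ 2 r)
    (harc : ∀ s, (deriv r s).1 ^ 2 + (deriv r s).2 ^ 2 = 1)
    (hν_unit : ∀ s, (ν s).1 ^ 2 + (ν s).2 ^ 2 = 1)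
    (hν_orth : ∀ s, (deriv r s).1 * (ν s).1 + (deriv r s).2 * (ν s).2 = 0)
    (hFrenet : ∀ s, deriv (fun s' => deriv r s') s = κ s • ν s)
    (O : Set Pt) (hO : IsOpen O)
    (u : Pt → ℝ × ℝ) (v p : Pt → ℝ)
    (hu : ContDiffOn ℝ 1 u O) (hv : ContDiffOn ℝ 1 v O) (hp : ContDiffOn ℝ 1 p O)
    (hmom1 : ∀ q ∈ O,
      ρ * (dT (fun z => (u z).1) q
        + (u q).1 * dX1 (fun z => (u z).1) q + (u q).2 * dX2 (fun z => (u z).1) q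
        + v q * dY (fun z => (u z).1) q) + dX1 p q = 0)
    (hmom2 : ∀ q ∈ O,
      ρ * (dT (fun z => (u z).2) q
        + (u q).1 * dX1 (fun z => (u z).2) q + (u q).2 * dX2 (fun z => (u z).2) q
        + v q * dY (fun z => (u z).2) q) + dX2 p q = 0)
    (S : Set Pt) (hSO : S ⊆ O)
    (hSrel : ∃ U : Set Pt, IsOpen U ∧
      S = U ∩ {q : Pt | ∃ s : ℝ, q.1 = r s})
    (himp : ∀ s y t, ((r s, y, t) : Pt) ∈ S →
      (u (r s, y, t)).1 * (ν s).1 + (u (r s, y, t)).2 * (ν s).2 = 0)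
    -- the free surface `η` near the wall point `x₀ = r s₀`
    (s₀ : ℝ)
    (D : Set (ℝ × ℝ)) (hD : IsOpen D) (hx₀D : r s₀ ∈ D)
    (I : Set ℝ) (hI : I.OrdConnected)
    (η : (ℝ × ℝ) × ℝ → ℝ) (hη : ContDiffOn ℝ 1 η (D ×ˢ I))
    (hsurfO : ∀ x ∈ D, ∀ t ∈ I, ((x, η (x, t), t) : Pt) ∈ O)
    (hdyn : ∀ x ∈ D, ∀ t ∈ I, p (x, η (x, t), t) = 0) :
    ∀ t ∈ I, ((r s₀, η (r s₀, t), t) : Pt) ∈ S →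
      (dY p (r s₀, η (r s₀, t), t)
          * (gX1 η (r s₀) t * (ν s₀).1 + gX2 η (r s₀) t * (ν s₀).2) =
        ρ * ((u (r s₀, η (r s₀, t), t)).1 * (deriv r s₀).1
            + (u (r s₀, η (r s₀, t), t)).2 * (deriv r s₀).2) ^ 2 * κ s₀)
      ∧ (dY p (r s₀, η (r s₀, t), t) ≠ 0 →
          gX1 η (r s₀) t * (ν s₀).1 + gX2 η (r s₀) t * (ν s₀).2 = 0 →
            κ s₀ = 0 ∨
              (u (r s₀, η (r s₀, t), t)).1 * (deriv r s₀).1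
                + (u (r s₀, η (r s₀, t), t)).2 * (deriv r s₀).2 = 0) :=
  free_surface_contact_angle_curved_wall_general ρ hρ r ν κ hr harc hν_unit hν_orth hFrenet O hO u v
    p hu hp hmom1 hmom2 S hSrel himp s₀ D hD hx₀D I η hη hsurfO hdyn

end
end

section
/- Let h, η : D×I → ℝ be C³ and ū : D×I → ℝ² be C² on an open set D ⊆ ℝ² times an interval I, with H := h + η > 0 and material derivative D̄(·) := (·)_t + ū·∇(·) (D̄² = D̄∘D̄). Define the Boussinesq-type pressure terms 𝒫 := ρgH²/2 − ρH·[(h/3)·D̄(h·div ū) + (h/2)·D̄²h] and p̌ := ρgH − ρH·[(1/2)·D̄(h·div ū) + D̄²h], and assume (H, ū) satisfies the mass equation H_t + div(H ū) = 0 and the momentum equation ū_t + (ū·∇)ū + ∇𝒫/(ρH) = p̌ ∇h/(ρH). Define the total energy density ℰ by ℰ/ρ := |ū|²/2 + (h²/6)(div ū)² + (h/2)(div ū)·D̄h + (D̄h)²/2 + g(H − 2h)/2. Then the total energy balance holds at every point: (Hℰ)_t + div((Hℰ + 𝒫)ū) = −p̌·h_t. In particular, over a steady bottom (h_t ≡ 0)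 this is a local conservation law. -/
noncomputable section

/-- Horizontal space-time points `((x₁,x₂), t)`. -/
abbrev Qt : Type := (ℝ × ℝ) × ℝ

/-- Partial derivative `∂_{x₁}`. -/
noncomputable def pX1 (f : Qt → ℝ) (q : Qt) : ℝ :=
  fderiv ℝ f q (((1 : ℝ), (0 : ℝ)), (0 : ℝ))

/-- Partial derivative `∂_{x₂}`. -/
noncomputable def pX2 (f : Qt → ℝ) (q : Qt) : ℝ :=
  fderiv ℝ f q (((0 : ℝ), (1 : ℝ)), (0 : ℝ))

/-- Partial derivative `∂_t`. -/
noncomputable def pT (f : Qt → ℝ) (q : Qt) : ℝ :=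
  fderiv ℝ f q (((0 : ℝ), (0 : ℝ)), (1 : ℝ))

/-- Horizontal divergence of a plane vector field. -/
noncomputable def divV (w : Qt → ℝ × ℝ) (q : Qt) : ℝ :=
  pX1 (fun z => (w z).1) q + pX2 (fun z => (w z).2) q

/-- Material derivative `D̄f := f_t + ū·∇f`. -/
noncomputable def matD (u : Qt → ℝ × ℝ) (f : Qt → ℝ) (q : Qt) : ℝ :=
  pT f q + (u q).1 * pX1 f q + (u q).2 * pX2 f q

/-- Boussinesq depth-integrated pressure
`𝒫 := ρgH²/2 − ρH[(h/3) D̄(h div ū) + (h/2) D̄²h]`, with `H = h + η`. -/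
noncomputable def bousP (ρ g : ℝ) (h η : Qt → ℝ) (u : Qt → ℝ × ℝ) (q : Qt) : ℝ :=
  ρ * g * (h q + η q) ^ 2 / 2
    - ρ * (h q + η q) *
        (h q / 3 * matD u (fun z => h z * divV u z) q
          + h q / 2 * matD u (fun z => matD u h z) q)

/-- Boussinesq bottom pressure
`p̌ := ρgH − ρH[(1/2) D̄(h div ū) + D̄²h]`, with `H = h + η`. -/
noncomputable def bousPc (ρ g : ℝ) (h η : Qt → ℝ) (u : Qt → ℝ × ℝ) (q : Qt) : ℝ :=
  ρ * g * (h q + η q)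
    - ρ * (h q + η q) *
        ((1 / 2) * matD u (fun z => h z * divV u z) q
          + matD u (fun z => matD u h z) q)

/-- Boussinesq total energy density
`ℰ := ρ(|ū|²/2 + h²(div ū)²/6 + (h/2)(div ū) D̄h + (D̄h)²/2 + g(H−2h)/2)`. -/
noncomputable def bousE (ρ g : ℝ) (h η : Qt → ℝ) (u : Qt → ℝ × ℝ) (q : Qt) : ℝ :=
  ρ * (((u q).1 ^ 2 + (u q).2 ^ 2) / 2
    + (h q) ^ 2 / 6 * (divV u q) ^ 2
    + h q / 2 * (divV u q) * matD u h q
    + (matD u h q) ^ 2 / 2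
    + g * ((h q + η q) - 2 * h q) / 2)

/-! The product rule gives
`∂ₜ(Hℰ) + div((Hℰ + 𝒫)ū) = ℰ (H_t + div(Hū)) + H D̄ℰ + ū·∇𝒫 + 𝒫 div ū`.
The mass equation kills the first term, and the momentum equation dotted with `ū` turns
`ρH ū·D̄ū + ū·∇𝒫` into `p̌ ū·∇h = p̌ (D̄h − h_t)`. What remains,
`H D̄(ℰ − ρ|ū|²/2) + 𝒫 div ū + p̌ D̄h`, vanishes identically once `D̄` is expanded as a
derivation and `D̄H = −H div ū` is used.

Regularity needs one observation: `∇𝒫` contains third derivatives of `ū`, which is only `C²`,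
but the mass equation gives `div ū = −D̄H / H`, and this is `C²` because `H` is `C³`. -/

theorem mul_add_eq_of_add_div_eq {K : Type*} [Field K] {a b c d : K} (hc : c ≠ 0)
    (h : a + b / c = d / c) : c * a + b = d := by
  field_simp at h
  linear_combination h

theorem matD_eq_fderiv (u : Qt → ℝ × ℝ) (f : Qt → ℝ) (q : Qt) :
    matD u f q = fderiv ℝ f q (u q, 1) := by
  have hv : ((u q, 1) : Qt) = (u q).1 • ((1, 0), 0) + (u q).2 • ((0, 1), 0) + ((0, 0), 1) := by
    ext <;> simp
  rw [hv, map_add, map_add, map_smul, map_smul, matD, pT, pX1, pX2, smul_eq_mul, smul_eq_mul]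
  ring

section Leibniz

variable {u : Qt → ℝ × ℝ} {f g : Qt → ℝ} {q : Qt}

theorem matD_add (hf : DifferentiableAt ℝ f q) (hg : DifferentiableAt ℝ g q) :
    matD u (fun z => f z + g z) q = matD u f q + matD u g q := by
  simp only [matD_eq_fderiv, fderiv_fun_add hf hg, add_apply]

theorem matD_sub (hf : DifferentiableAt ℝ f q) (hg : DifferentiableAt ℝ g q) :
    matD u (fun z => f z - g z) q = matD u f q - matD u g q := by
  simp only [matD_eq_fderiv, fderiv_fun_sub hf hg, sub_apply]

theorem matD_mul (hf : DifferentiableAt ℝ f q) (hg : DifferentiableAt ℝ g q) :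
    matD u (fun z => f z * g z) q = matD u f q * g q + f q * matD u g q := by
  simp only [matD_eq_fderiv, fderiv_fun_mul hf hg, add_apply,
    smul_apply, smul_eq_mul]
  ring

theorem matD_const (c : ℝ) : matD u (fun _ => c) q = 0 := by
  simp [matD_eq_fderiv]

end Leibniz

theorem matD_bousE {ρ g : ℝ} {h η : Qt → ℝ} {u : Qt → ℝ × ℝ} {q : Qt}
    (hh : DifferentiableAt ℝ h q) (hη : DifferentiableAt ℝ η q) (hu : DifferentiableAt ℝ u q)
    (hδ : DifferentiableAt ℝ (divV u) q) (ha : DifferentiableAt ℝ (matD u h) q) :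
    matD u (bousE ρ g h η u) q =
      ρ * ((u q).1 * matD u (fun z => (u z).1) q + (u q).2 * matD u (fun z => (u z).2) q
        + (h q * divV u q / 3 + matD u h q / 2) * matD u (fun z => h z * divV u z) q
        + (h q * divV u q / 2 + matD u h q) * matD u (fun z => matD u h z) q
        + g * (matD u (fun z => h z + η z) q - 2 * matD u h q) / 2) := by
  unfold bousE
  simp only [div_eq_mul_inv, pow_two]
  simp (disch := fun_prop) only [matD_add, matD_sub, matD_mul, matD_const]
  ring

section Flux

variable {u : Qt → ℝ × ℝ} {H : Qt → ℝ} {q : Qt}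

theorem mass_flux_eq (hH : DifferentiableAt ℝ H q) (hu : DifferentiableAt ℝ u q) :
    pT H q + pX1 (fun z => H z * (u z).1) q + pX2 (fun z => H z * (u z).2) q =
      matD u H q + H q * divV u q := by
  unfold matD divV pT pX1 pX2
  simp (disch := fun_prop) only [fderiv_fun_mul, add_apply, smul_apply, smul_eq_mul]
  ring

theorem energy_flux_eq {E P : Qt → ℝ} (hH : DifferentiableAt ℝ H q)
    (hE : DifferentiableAt ℝ E q) (hP : DifferentiableAt ℝ P q) (hu : DifferentiableAt ℝ u q) :
    pT (fun z => H z * E z) q + pX1 (fun z => (H z * E z + P z) * (u z).1) q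
        + pX2 (fun z => (H z * E z + P z) * (u z).2) q =
      E q * (pT H q + pX1 (fun z => H z * (u z).1) q + pX2 (fun z => H z * (u z).2) q)
        + H q * matD u E q + ((u q).1 * pX1 P q + (u q).2 * pX2 P q) + P q * divV u q := by
  unfold matD divV pT pX1 pX2
  simp (disch := fun_prop) only [fderiv_fun_mul, fderiv_fun_add, add_apply, smul_apply,
    smul_eq_mul]
  ring

end Flux

theorem bousE_balance_at {ρ g : ℝ} {h η : Qt → ℝ} {u : Qt → ℝ × ℝ} {q : Qt}
    (hh : DifferentiableAt ℝ h q) (hη : DifferentiableAt ℝ η q) (hu : DifferentiableAt ℝ u q)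
    (hδ : DifferentiableAt ℝ (divV u) q) (ha : DifferentiableAt ℝ (matD u h) q)
    (hA : DifferentiableAt ℝ (matD u (fun z => h z * divV u z)) q)
    (hB : DifferentiableAt ℝ (matD u (fun z => matD u h z)) q)
    (hmass : pT (fun z => h z + η z) q + pX1 (fun z => (h z + η z) * (u z).1) q
        + pX2 (fun z => (h z + η z) * (u z).2) q = 0)
    (hmom1 : ρ * (h q + η q) * matD u (fun z => (u z).1) q
        + pX1 (fun z => bousP ρ g h η u z) q = bousPc ρ g h η u q * pX1 h q)
    (hmom2 : ρ * (h q + η q) * matD u (fun z => (u z).2) q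
        + pX2 (fun z => bousP ρ g h η u z) q = bousPc ρ g h η u q * pX2 h q) :
    pT (fun z => (h z + η z) * bousE ρ g h η u z) q
        + pX1 (fun z => ((h z + η z) * bousE ρ g h η u z + bousP ρ g h η u z) * (u z).1) q
        + pX2 (fun z => ((h z + η z) * bousE ρ g h η u z + bousP ρ g h η u z) * (u z).2) q =
      -(bousPc ρ g h η u q * pT h q) := by
  have hH : DifferentiableAt ℝ (fun z => h z + η z) q := hh.add hη
  have hE : DifferentiableAt ℝ (bousE ρ g h η u) q := by unfold bousE; fun_prop
  have hP : DifferentiableAt ℝ (bousP ρ g h η u) q := by unfold bousP; fun_prop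
  have hDH : matD u (fun z => h z + η z) q = -((h q + η q) * divV u q) := by
    linear_combination (mass_flux_eq hH hu).symm.trans hmass
  have hDh : matD u h q = pT h q + (u q).1 * pX1 h q + (u q).2 * pX2 h q := rfl
  have hP_q : bousP ρ g h η u q = ρ * g * (h q + η q) ^ 2 / 2
      - ρ * (h q + η q) * (h q / 3 * matD u (fun z => h z * divV u z) q
        + h q / 2 * matD u (fun z => matD u h z) q) := rfl
  have hPc_q : bousPc ρ g h η u q = ρ * g * (h q + η q) - ρ * (h q + η q) *
      ((1 / 2) * matD u (fun z => h z * divV u z) q + matD u (fun z => matD u h z) q) := rfl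
  rw [energy_flux_eq hH hE hP hu, hmass, matD_bousE hh hη hu hδ ha]
  linear_combination (u q).1 * hmom1 + (u q).2 * hmom2 + ρ * g * (h q + η q) / 2 * hDH
    - bousPc ρ g h η u q * hDh + divV u q * hP_q + matD u h q * hPc_q

section Smoothness

variable {m : WithTop ℕ∞} {s : Set Qt} {u : Qt → ℝ × ℝ}

theorem contDiffOn_matD {f : Qt → ℝ} (hf : ContDiffOn ℝ (m + 1) f s) (hu : ContDiffOn ℝ m u s)
    (hs : IsOpen s) : ContDiffOn ℝ m (matD u f) s := by
  rw [show matD u f = fun q => fderiv ℝ f q (u q, 1) from funext (matD_eq_fderiv u f)]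
  exact (hf.fderiv_of_isOpen hs le_rfl).clm_apply (hu.prodMk contDiffOn_const)

theorem contDiffOn_divV_of_mass {H : Qt → ℝ} (hs : IsOpen s) (hH : ContDiffOn ℝ (m + 1) H s)
    (hu : ContDiffOn ℝ m u s) (hm : m ≠ 0) (hH₀ : ∀ q ∈ s, H q ≠ 0)
    (hmass : ∀ q ∈ s,
      pT H q + pX1 (fun z => H z * (u z).1) q + pX2 (fun z => H z * (u z).2) q = 0) :
    ContDiffOn ℝ m (divV u) s := by
  refine ((contDiffOn_matD hH hu hs).neg.div (hH.of_le le_self_add) hH₀).congr fun q hq => ?_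
  have hflux := mass_flux_eq (u := u) ((hH.differentiableOn (by simp)).differentiableAt
    (hs.mem_nhds hq)) ((hu.differentiableOn hm).differentiableAt (hs.mem_nhds hq))
  rw [hmass q hq] at hflux
  show divV u q = -matD u H q / H q
  field_simp [hH₀ q hq]
  linear_combination -hflux

end Smoothness

theorem boussinesq_energy_balance_general
    (ρ g : ℝ) (hρ : 0 < ρ)
    (D : Set (ℝ × ℝ)) (hD : IsOpen D)
    (I : Set ℝ) (hIopen : IsOpen I)
    (h η : Qt → ℝ) (u : Qt → ℝ × ℝ)
    (hh : ContDiffOn ℝ 3 h (D ×ˢ I)) (hη : ContDiffOn ℝ 3 η (D ×ˢ I))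
    (hu : ContDiffOn ℝ 2 u (D ×ˢ I))
    (hHpos : ∀ q ∈ D ×ˢ I, 0 < h q + η q)
    -- mass equation `H_t + div(H ū) = 0`
    (hmass : ∀ q ∈ D ×ˢ I,
      pT (fun z => h z + η z) q
        + pX1 (fun z => (h z + η z) * (u z).1) q
        + pX2 (fun z => (h z + η z) * (u z).2) q = 0)
    -- momentum equation with the Boussinesq pressures
    (hmom1 : ∀ q ∈ D ×ˢ I,
      matD u (fun z => (u z).1) q
        + pX1 (fun z => bousP ρ g h η u z) q / (ρ * (h q + η q)) =
        bousPc ρ g h η u q * pX1 h q / (ρ * (h q + η q)))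
    (hmom2 : ∀ q ∈ D ×ˢ I,
      matD u (fun z => (u z).2) q
        + pX2 (fun z => bousP ρ g h η u z) q / (ρ * (h q + η q)) =
        bousPc ρ g h η u q * pX2 h q / (ρ * (h q + η q))) :
    (∀ q ∈ D ×ˢ I,
      pT (fun z => (h z + η z) * bousE ρ g h η u z) q
        + pX1 (fun z =>
            ((h z + η z) * bousE ρ g h η u z + bousP ρ g h η u z) * (u z).1) q
        + pX2 (fun z =>
            ((h z + η z) * bousE ρ g h η u z + bousP ρ g h η u z) * (u z).2) q =
        -(bousPc ρ g h η u q * pT h q))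
    ∧ ((∀ q ∈ D ×ˢ I, pT h q = 0) →
      ∀ q ∈ D ×ˢ I,
        pT (fun z => (h z + η z) * bousE ρ g h η u z) q
          + pX1 (fun z =>
              ((h z + η z) * bousE ρ g h η u z + bousP ρ g h η u z) * (u z).1) q
          + pX2 (fun z =>
              ((h z + η z) * bousE ρ g h η u z + bousP ρ g h η u z) * (u z).2) q = 0) := by
  have hs : IsOpen (D ×ˢ I) := hD.prod hIopen
  have hδ : ContDiffOn ℝ 2 (divV u) (D ×ˢ I) :=
    contDiffOn_divV_of_mass hs (hh.add hη) hu (by simp) (fun q hq => (hHpos q hq).ne') hmass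
  have ha : ContDiffOn ℝ 2 (matD u h) (D ×ˢ I) := contDiffOn_matD hh hu hs
  have hA : ContDiffOn ℝ 1 (matD u fun z => h z * divV u z) (D ×ˢ I) :=
    contDiffOn_matD ((hh.of_le (by norm_num)).mul hδ) (hu.of_le (by norm_num)) hs
  have hB : ContDiffOn ℝ 1 (matD u fun z => matD u h z) (D ×ˢ I) :=
    contDiffOn_matD ha (hu.of_le (by norm_num)) hs
  have balance := fun q (hq : q ∈ D ×ˢ I) =>
    have hq' := hs.mem_nhds hq
    have hρH : ρ * (h q + η q) ≠ 0 := mul_ne_zero hρ.ne' (hHpos q hq).ne'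
    bousE_balance_at (ρ := ρ) (g := g)
      ((hh.contDiffAt hq').differentiableAt (by simp))
      ((hη.contDiffAt hq').differentiableAt (by simp))
      ((hu.contDiffAt hq').differentiableAt (by simp))
      ((hδ.contDiffAt hq').differentiableAt (by simp))
      ((ha.contDiffAt hq').differentiableAt (by simp))
      ((hA.contDiffAt hq').differentiableAt (by simp))
      ((hB.contDiffAt hq').differentiableAt (by simp))
      (hmass q hq) (mul_add_eq_of_add_div_eq hρH (hmom1 q hq))
      (mul_add_eq_of_add_div_eq hρH (hmom2 q hq))
  exact ⟨balance, fun hflat q hq => by simpa [hflat q hq] using balance q hq⟩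

/-- Total-energy balance of the modified weakly nonlinear
weakly dispersive (Boussinesq-type) model: if `(H, ū)` satisfies the mass
equation `H_t + div(H ū) = 0` and the momentum equation
`ū_t + (ū·∇)ū + ∇𝒫/(ρH) = p̌∇h/(ρH)` with the Boussinesq pressures `𝒫, p̌`,
then `(Hℰ)_t + div((Hℰ + 𝒫)ū) = −p̌ h_t`; in particular, over a steady bottom
this is a local conservation law. -/
theorem boussinesq_energy_balance
    (ρ g : ℝ) (hρ : 0 < ρ)
    (D : Set (ℝ × ℝ)) (hD : IsOpen D)
    (I : Set ℝ) (hIopen : IsOpen I) (hIord : I.OrdConnected)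
    (h η : Qt → ℝ) (u : Qt → ℝ × ℝ)
    (hh : ContDiffOn ℝ 3 h (D ×ˢ I)) (hη : ContDiffOn ℝ 3 η (D ×ˢ I))
    (hu : ContDiffOn ℝ 2 u (D ×ˢ I))
    (hHpos : ∀ q ∈ D ×ˢ I, 0 < h q + η q)
    -- mass equation `H_t + div(H ū) = 0`
    (hmass : ∀ q ∈ D ×ˢ I,
      pT (fun z => h z + η z) q
        + pX1 (fun z => (h z + η z) * (u z).1) q
        + pX2 (fun z => (h z + η z) * (u z).2) q = 0)
    -- momentum equation with the Boussinesq pressures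
    (hmom1 : ∀ q ∈ D ×ˢ I,
      matD u (fun z => (u z).1) q
        + pX1 (fun z => bousP ρ g h η u z) q / (ρ * (h q + η q)) =
        bousPc ρ g h η u q * pX1 h q / (ρ * (h q + η q)))
    (hmom2 : ∀ q ∈ D ×ˢ I,
      matD u (fun z => (u z).2) q
        + pX2 (fun z => bousP ρ g h η u z) q / (ρ * (h q + η q)) =
        bousPc ρ g h η u q * pX2 h q / (ρ * (h q + η q))) :
    (∀ q ∈ D ×ˢ I,
      pT (fun z => (h z + η z) * bousE ρ g h η u z) q
        + pX1 (fun z =>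
            ((h z + η z) * bousE ρ g h η u z + bousP ρ g h η u z) * (u z).1) q
        + pX2 (fun z =>
            ((h z + η z) * bousE ρ g h η u z + bousP ρ g h η u z) * (u z).2) q =
        -(bousPc ρ g h η u q * pT h q))
    ∧ ((∀ q ∈ D ×ˢ I, pT h q = 0) →
      ∀ q ∈ D ×ˢ I,
        pT (fun z => (h z + η z) * bousE ρ g h η u z) q
          + pX1 (fun z =>
              ((h z + η z) * bousE ρ g h η u z + bousP ρ g h η u z) * (u z).1) q
          + pX2 (fun z =>
              ((h z + η z) * bousE ρ g h η u z + bousP ρ g h η u z) * (u z).2) q = 0) :=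
  boussinesq_energy_balance_general ρ g hρ D hD I hIopen h η u hh hη hu hHpos hmass hmom1 hmom2

end
end
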